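/- arXiv:2408.00393 — 2 statements merged into one kernel-verified Lean document; each statement's English description precedes it below -/
import Mathlib

section
/- If Q is weakly lean, then for any Q-maps ζ, η : X ⇸ Y between the same sets, ζ ≤ η (pointwise) implies ζ = η. -/
/-!
For a `Q`-map `θ` and a point `x`, the elements `θ*(y,x) ⊓ θ(x,y)`, `y ∈ Y`, satisfy the hypotheses
of weak leanness, so `1 ≤ ⨆ y, (θ*(y,x) ⊓ θ(x,y))²`. Multiplying `η(x,y)` by these covers for both
`θ = ζ` and `θ = η`, every summand either collapses to `⊥` by the orthogonality
`θ*(v,x) & θ(x,w) ≤ id(v,w)` or, when all indices agree with `y`, is at most `ζ(x,y)`;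
here `ζ ≤ η` is what lets the cover of `ζ` be cancelled against `η*`.
-/

open Classical

noncomputable section

/-- Composition of `Q`-relations: `(ψ ∘ φ)(x,z) = ⨆ y, ψ y z & φ x y`. -/
def QR.comp {Q : Type*} [CompleteLattice Q] [Mul Q] {X Y Z : Type*}
    (ψ : Y → Z → Q) (φ : X → Y → Q) : X → Z → Q :=
  fun x z => ⨆ y, ψ y z * φ x y

/-- The identity `Q`-relation on `X`: `k` on the diagonal and `⊥` elsewhere. -/
def QR.id {Q : Type*} [CompleteLattice Q] [One Q] (X : Type*) : X → X → Q :=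
  fun x y => if x = y then 1 else ⊥

/-- `ζ*(y,x) = ⨅ z, (ζ x z → id_Y y z)`, the canonical right-adjoint candidate of `ζ`
with respect to the residuation `himp`. -/
def QR.star {Q : Type*} [CompleteLattice Q] [One Q] {X Y : Type*}
    (himp : Q → Q → Q) (ζ : X → Y → Q) : Y → X → Q :=
  fun y x => ⨅ z, himp (ζ x z) (QR.id Y y z)

/-- `ζ` is a `Q`-map: `id_X ≤ ζ* ∘ ζ` and `ζ ∘ ζ* ≤ id_Y`. -/
def QR.IsMap {Q : Type*} [CompleteLattice Q] [Mul Q] [One Q] {X Y : Type*}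
    (himp : Q → Q → Q) (ζ : X → Y → Q) : Prop :=
  (∀ x x', QR.id X x x' ≤ QR.comp (QR.star himp ζ) ζ x x') ∧
  (∀ y y', QR.comp ζ (QR.star himp ζ) y y' ≤ QR.id Y y y')

/-- `Q` is lean. -/
def IsLeanQuantale (Q : Type*) [CompleteLattice Q] [CommMonoid Q] : Prop :=
  (∀ p q : Q, p ⊔ q = 1 → p * q = ⊥ → p = 1 ∨ q = 1) ∧
  (∀ p q : Q, p * q = 1 ↔ p = 1 ∧ q = 1)

/-- `Q` is weakly lean. -/
def IsWeaklyLeanQuantale (Q : Type*) [CompleteLattice Q] [CommMonoid Q] : Prop :=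
  ∀ (I : Type) (p q : I → Q),
    (⨆ i, p i * q i) = 1 → (∀ i j, i ≠ j → p i * q j = ⊥) →
    1 ≤ ⨆ i, (p i ⊓ q i) * (p i ⊓ q i)

open Quantale

theorem IsQuantale.of_mul_sSup_distrib {Q : Type*} [CommSemigroup Q] [CompleteLattice Q]
    (hdist : ∀ (p : Q) (s : Set Q), p * sSup s = ⨆ q ∈ s, p * q) : IsQuantale Q where
  mul_sSup_distrib := hdist
  sSup_mul_distrib s p := by simpa only [mul_comm] using hdist p s

namespace QR

variable {Q : Type*} [CompleteLattice Q] [CommMonoid Q] {X Y : Type*}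

theorem id_self (y : Y) : (QR.id Y y y : Q) = 1 := if_pos rfl

theorem id_of_ne {y z : Y} (h : y ≠ z) : (QR.id Y y z : Q) = ⊥ := if_neg h

section Residuation

variable {himp : Q → Q → Q} (hres : ∀ p q r : Q, p * q ≤ r ↔ p ≤ himp q r)
include hres

theorem star_mul_le_id (θ : X → Y → Q) (x : X) (y z : Y) :
    star himp θ y x * θ x z ≤ QR.id Y y z :=
  (hres _ _ _).mpr (iInf_le (fun z' => himp (θ x z') (QR.id Y y z')) z)

theorem star_mul_eq_bot (θ : X → Y → Q) (x : X) {y z : Y} (hyz : y ≠ z) :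
    star himp θ y x * θ x z = ⊥ :=
  le_bot_iff.mp <| (star_mul_le_id hres θ x y z).trans_eq (id_of_ne hyz)

theorem iSup_star_mul_eq_one {θ : X → Y → Q}
    (htot : ∀ x x', QR.id X x x' ≤ comp (star himp θ) θ x x') (x : X) :
    ⨆ y, star himp θ y x * θ x y = 1 := by
  refine le_antisymm (iSup_le fun y => (star_mul_le_id hres θ x y y).trans_eq (id_self y)) ?_
  simpa only [comp, id_self] using htot x x

theorem one_le_iSup_star_inf_sq (hwl : IsWeaklyLeanQuantale Q) {Y : Type} {θ : X → Y → Q}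
    (htot : ∀ x x', QR.id X x x' ≤ comp (star himp θ) θ x x') (x : X) :
    1 ≤ ⨆ y, (star himp θ y x ⊓ θ x y) * (star himp θ y x ⊓ θ x y) :=
  hwl Y (fun y => star himp θ y x) (fun y => θ x y) (iSup_star_mul_eq_one hres htot x)
    fun _ _ => star_mul_eq_bot hres θ x

end Residuation

section Quantale

variable [IsQuantale Q]

theorem mul_id_le (f : Y → Q) (y z : Y) : f y * QR.id Y y z ≤ f z := by
  by_cases hyz : y = z
  · rw [hyz, id_self, mul_one]
  · rw [id_of_ne hyz, mul_bot]; exact bot_le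

theorem id_mul_id_le (u v w : Y) : (QR.id Y u v : Q) * QR.id Y u w ≤ QR.id Y v w := by
  by_cases huv : u = v
  · rw [huv, id_self, one_mul]
  · rw [id_of_ne huv, bot_mul]; exact bot_le

theorem apply_le_of_le {himp : Q → Q → Q} (hres : ∀ p q r : Q, p * q ≤ r ↔ p ≤ himp q r)
    (hwl : IsWeaklyLeanQuantale Q) {Y : Type} {ζ η : X → Y → Q}
    (hζ : ∀ x x', QR.id X x x' ≤ comp (star himp ζ) ζ x x')
    (hη : ∀ x x', QR.id X x x' ≤ comp (star himp η) η x x')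
    (hle : ∀ x y, ζ x y ≤ η x y) (x : X) (y : Y) : η x y ≤ ζ x y := by
  set a := fun w => star himp ζ w x ⊓ ζ x w
  set c := fun v => star himp η v x ⊓ η x v
  have summand_le : ∀ w v, a w * a w * (c v * c v * η x y) ≤ ζ x y := fun w v =>
    calc a w * a w * (c v * c v * η x y) = a w * ((c v * a w) * (c v * η x y)) := by ac_rfl
      _ ≤ ζ x w * (QR.id Y v w * QR.id Y v y) := by
        gcongr
        · exact inf_le_right
        · exact (mul_le_mul' inf_le_left (inf_le_right.trans (hle x w))).trans
            (star_mul_le_id hres η x v w)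
        · exact (mul_le_mul_left inf_le_left _).trans (star_mul_le_id hres η x v y)
      _ ≤ ζ x w * QR.id Y w y := by gcongr; exact id_mul_id_le v w y
      _ ≤ ζ x y := mul_id_le (ζ x) w y
  calc η x y = 1 * (1 * η x y) := by rw [one_mul, one_mul]
    _ ≤ (⨆ w, a w * a w) * ((⨆ v, c v * c v) * η x y) := by
        gcongr
        · exact one_le_iSup_star_inf_sq hres hwl hζ x
        · exact one_le_iSup_star_inf_sq hres hwl hη x
    _ = ⨆ w, ⨆ v, a w * a w * (c v * c v * η x y) := by
        rw [iSup_mul_distrib]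
        simp only [iSup_mul_distrib, mul_iSup_distrib]
    _ ≤ ζ x y := iSup₂_le summand_le

end Quantale

end QR

theorem stmt9_general {Q : Type*} [CompleteLattice Q] [CommMonoid Q]
    (hdist : ∀ (p : Q) (s : Set Q), p * sSup s = ⨆ q ∈ s, p * q)
    (himp : Q → Q → Q)
    (hres : ∀ p q r : Q, p * q ≤ r ↔ p ≤ himp q r)
    (hwl : IsWeaklyLeanQuantale Q)
    {X Y : Type} (ζ η : X → Y → Q)
    (hζ : QR.IsMap himp ζ) (hη : QR.IsMap himp η)
    (hle : ∀ (x : X) (y : Y), ζ x y ≤ η x y) :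
    ζ = η := by
  have := IsQuantale.of_mul_sSup_distrib hdist
  funext x y
  exact le_antisymm (hle x y) (QR.apply_le_of_le hres hwl hζ.1 hη.1 hle x y)

/-- if `Q` is weakly lean, then for `Q`-maps `ζ, η : X ⇸ Y`,
`ζ ≤ η` implies `ζ = η`. -/
theorem stmt9 {Q : Type*} [CompleteLattice Q] [CommMonoid Q]
    (hbot : (⊥ : Q) < 1)
    (hdist : ∀ (p : Q) (s : Set Q), p * sSup s = ⨆ q ∈ s, p * q)
    (himp : Q → Q → Q)
    (hres : ∀ p q r : Q, p * q ≤ r ↔ p ≤ himp q r)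
    (hwl : IsWeaklyLeanQuantale Q)
    {X Y : Type} (ζ η : X → Y → Q)
    (hζ : QR.IsMap himp ζ) (hη : QR.IsMap himp η)
    (hle : ∀ (x : X) (y : Y), ζ x y ≤ η x y) :
    ζ = η :=
  stmt9_general hdist himp hres hwl ζ η hζ hη hle
end
end

section
/- Let G be a group with identity element e, and let μ : {⋆} ⇸ G be a Q-map. Let G₀ = {a ∈ G : a ≠ e} and let (G₀)₊ = G₀ ⊔ {⋆}. Define Q-relations ζ : G ⇸ (G₀)₊ by ζ(x,a) = μ*(x·a, ⋆) for a ∈ G₀ and ζ(x,⋆) = μ*(x,⋆), and η : (G₀)₊ ⇸ G by η(a,x) = μ(⋆, x·a) for a ∈ G₀ and η(⋆,x) = μ(⋆,x). Then η∘ζ = id_G, ζ∘η = id_{(G₀)₊}, ζ∘μ = τ, and η∘τ = μ, where τ : {⋆} ⇸ (G₀)₊ is given by τ(⋆,⋆) = k and τ(⋆,a) = ⊥ for a ∈ G₀. In particular, ζ and η are mutually inverse Q-maps exhibiting an isomorphism between the object μ of {⋆}/Q-Map and the free algebra (G₀)₊. -/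
open Classical

noncomputable section

/-!
Identify `(G₀)₊` with `G` by sending `⋆` to `e`; then `ζ(x, c) = μ*(x c, ⋆)` and
`η(c, x) = μ(⋆, x c)`, so each composite in the statement is a join `⨆ᵢ μ*(uᵢ, ⋆) & μ(⋆, vᵢ)`.
Because `μ` is a `Q`-map, such a join is `⊥` when `uᵢ ≠ vᵢ` for all `i`, and is `k` when `u = v`
is surjective; translations in `G` supply the surjectivity. Finally, mutually inverse `Q`-relations
are `Q`-maps, since the inverse of `ζ` lies below `ζ*`.
-/

namespace QR

section Residuated

variable {Q : Type*} [CompleteLattice Q] [CommMonoid Q] {himp : Q → Q → Q}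

theorem mul_bot_of_residuated (hres : ∀ p q r : Q, p * q ≤ r ↔ p ≤ himp q r) (p : Q) :
    p * ⊥ = ⊥ := by
  rw [mul_comm]
  exact le_bot_iff.1 ((hres _ _ _).2 bot_le)

theorem mul_le_mul_right_of_residuated (hres : ∀ p q r : Q, p * q ≤ r ↔ p ≤ himp q r)
    {p q : Q} (h : p ≤ q) (r : Q) : p * r ≤ q * r :=
  (hres _ _ _).2 (h.trans ((hres _ _ _).1 le_rfl))

variable {X Y Z : Type*}

theorem comp_mono_left (hres : ∀ p q r : Q, p * q ≤ r ↔ p ≤ himp q r)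
    {ψ ψ' : Y → Z → Q} (h : ψ ≤ ψ') (φ : X → Y → Q) : comp ψ φ ≤ comp ψ' φ :=
  fun _ z => iSup_mono fun y => mul_le_mul_right_of_residuated hres (h y z) _

theorem comp_const_id (hres : ∀ p q r : Q, p * q ≤ r ↔ p ≤ himp q r)
    (ψ : Y → Z → Q) (y₀ : Y) : comp ψ (fun (_ : X) => QR.id Y y₀) = fun _ => ψ y₀ := by
  funext _ z
  simp only [comp, QR.id, mul_ite, mul_one, mul_bot_of_residuated hres]
  simp [← iSup_eq_if]

theorem comp_star_le_id (hres : ∀ p q r : Q, p * q ≤ r ↔ p ≤ himp q r)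
    (ζ : X → Y → Q) (y y' : Y) : comp ζ (star himp ζ) y y' ≤ QR.id Y y y' :=
  iSup_le fun x => by
    rw [mul_comm]
    exact (hres _ _ _).2 (iInf_le _ y')

theorem le_star_of_comp_eq_id (hres : ∀ p q r : Q, p * q ≤ r ↔ p ≤ himp q r)
    {ζ : X → Y → Q} {η : Y → X → Q} (h : comp ζ η = QR.id Y) : η ≤ star himp ζ :=
  fun y x => le_iInf fun z => (hres _ _ _).1 <| by
    rw [mul_comm, ← h]
    exact le_iSup (fun x => ζ x z * η y x) x

theorem isMap_of_comp_eq_id (hres : ∀ p q r : Q, p * q ≤ r ↔ p ≤ himp q r)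
    {ζ : X → Y → Q} {η : Y → X → Q} (hηζ : comp η ζ = QR.id X) (hζη : comp ζ η = QR.id Y) :
    IsMap himp ζ :=
  ⟨fun x x' => by
    rw [← hηζ]
    exact comp_mono_left hres (le_star_of_comp_eq_id hres hζη) ζ x x',
   comp_star_le_id hres ζ⟩

end Residuated

namespace IsMap

variable {Q : Type*} [CompleteLattice Q] [CommMonoid Q] {himp : Q → Q → Q}
  {X Y : Type*} {μ : X → Y → Q}

theorem mul_star_le_id (hμ : IsMap himp μ) (x : X) (y z : Y) :
    μ x z * star himp μ y x ≤ QR.id Y y z :=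
  (le_iSup (fun x => μ x z * star himp μ y x) x).trans (hμ.2 y z)

theorem one_le_iSup_star_mul (hμ : IsMap himp μ) (x : X) :
    1 ≤ ⨆ y, star himp μ y x * μ x y := by
  simpa [QR.id, comp] using hμ.1 x x

theorem iSup_star_mul_eq_id (hμ : IsMap himp μ) (x : X) {I : Type*} {u v : I → Y}
    (hu : u.Surjective) {W : Type*} {y z : W} (huv : ∀ i, u i = v i ↔ y = z) :
    ⨆ i, star himp μ (u i) x * μ x (v i) = QR.id W y z := by
  by_cases hyz : y = z
  · obtain rfl : u = v := funext fun i => (huv i).2 hyz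
    rw [hu.iSup_comp (fun y => star himp μ y x * μ x y)]
    have hid : QR.id W y z = (1 : Q) := if_pos hyz
    refine le_antisymm (iSup_le fun y' => ?_) (hid.le.trans (hμ.one_le_iSup_star_mul x))
    rw [hid, mul_comm]
    simpa [QR.id] using hμ.mul_star_le_id x y' y'
  · refine (iSup_eq_bot.2 fun i => le_bot_iff.1 ?_).trans (if_neg hyz).symm
    rw [mul_comm]
    simpa [QR.id, (huv i).not.2 hyz] using hμ.mul_star_le_id x (u i) (v i)

end IsMap

section Free

def freeUnit (Q G : Type*) [CompleteLattice Q] [One Q] [One G] :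
    PUnit → ({a : G // a ≠ 1} ⊕ PUnit) → Q :=
  fun _ => QR.id _ (Sum.inr PUnit.unit)

variable {Q : Type*} [CompleteLattice Q] [CommMonoid Q] {himp : Q → Q → Q}
  {G : Type*} [Group G] {μ : PUnit → G → Q}

-- `Equiv.subtypeNeSumPUnit 1` sends `inl a ↦ a` and `inr ⋆ ↦ 1`, which merges the two clauses
-- defining `ζ` (and `η`) into one formula.
def toFree (himp : Q → Q → Q) (μ : PUnit → G → Q) : G → ({a : G // a ≠ 1} ⊕ PUnit) → Q :=
  fun x c => star himp μ (x * Equiv.subtypeNeSumPUnit 1 c) PUnit.unit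

def ofFree (μ : PUnit → G → Q) : ({a : G // a ≠ 1} ⊕ PUnit) → G → Q :=
  fun c x => μ PUnit.unit (x * Equiv.subtypeNeSumPUnit 1 c)

theorem comp_ofFree_toFree (hμ : IsMap himp μ) : comp (ofFree μ) (toFree himp μ) = QR.id G := by
  funext x x'
  simp only [comp, ofFree, toFree, mul_comm (μ _ _)]
  exact hμ.iSup_star_mul_eq_id _
    ((mul_left_surjective x).comp (Equiv.subtypeNeSumPUnit 1).surjective) fun _ => mul_left_inj _

theorem comp_toFree_ofFree (hμ : IsMap himp μ) :
    comp (toFree himp μ) (ofFree μ) = QR.id ({a : G // a ≠ 1} ⊕ PUnit) := by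
  funext b c
  simp only [comp, ofFree, toFree]
  refine hμ.iSup_star_mul_eq_id _ (mul_right_surjective _) fun _ => ?_
  rw [mul_right_inj, (Equiv.subtypeNeSumPUnit 1).injective.eq_iff, eq_comm]

theorem comp_toFree_self (hμ : IsMap himp μ) : comp (toFree himp μ) μ = freeUnit Q G := by
  funext ⟨⟩ c
  simp only [comp, toFree, freeUnit]
  refine hμ.iSup_star_mul_eq_id (v := fun x => x) _ (mul_right_surjective _) fun _ => ?_
  rw [mul_eq_left, eq_comm (a := Sum.inr _)]
  exact (Equiv.subtypeNeSumPUnit 1).injective.eq_iff' rfl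

theorem comp_ofFree_freeUnit (hres : ∀ p q r : Q, p * q ≤ r ↔ p ≤ himp q r) :
    comp (ofFree μ) (freeUnit Q G) = μ := by
  unfold freeUnit
  rw [comp_const_id hres]
  funext ⟨⟩ x
  exact congrArg _ (mul_one x)

end Free

end QR

theorem stmt17_general {Q : Type*} [CompleteLattice Q] [CommMonoid Q]
    (himp : Q → Q → Q)
    (hres : ∀ p q r : Q, p * q ≤ r ↔ p ≤ himp q r)
    {G : Type*} [Group G]
    (μ : PUnit → G → Q) (hμ : QR.IsMap himp μ)
    (ζ : G → ({a : G // a ≠ 1} ⊕ PUnit) → Q)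
    (hζl : ∀ (x : G) (a : {a : G // a ≠ 1}),
      ζ x (Sum.inl a) = QR.star himp μ (x * (a : G)) PUnit.unit)
    (hζr : ∀ x : G, ζ x (Sum.inr PUnit.unit) = QR.star himp μ x PUnit.unit)
    (η : ({a : G // a ≠ 1} ⊕ PUnit) → G → Q)
    (hηl : ∀ (a : {a : G // a ≠ 1}) (x : G),
      η (Sum.inl a) x = μ PUnit.unit (x * (a : G)))
    (hηr : ∀ x : G, η (Sum.inr PUnit.unit) x = μ PUnit.unit x)
    (τ : PUnit → ({a : G // a ≠ 1} ⊕ PUnit) → Q)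
    (hτl : ∀ a : {a : G // a ≠ 1}, τ PUnit.unit (Sum.inl a) = ⊥)
    (hτr : τ PUnit.unit (Sum.inr PUnit.unit) = 1) :
    QR.comp η ζ = QR.id G ∧
    QR.comp ζ η = QR.id ({a : G // a ≠ 1} ⊕ PUnit) ∧
    QR.comp ζ μ = τ ∧
    QR.comp η τ = μ ∧
    QR.IsMap himp ζ ∧
    QR.IsMap himp η := by
  obtain rfl : ζ = QR.toFree himp μ := by
    funext x c
    rcases c with a | ⟨⟩
    exacts [hζl x a, (hζr x).trans (congrArg (QR.star himp μ · _) (mul_one x).symm)]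
  obtain rfl : η = QR.ofFree μ := by
    funext c x
    rcases c with a | ⟨⟩
    exacts [hηl a x, (hηr x).trans (congrArg _ (mul_one x).symm)]
  obtain rfl : τ = QR.freeUnit Q G := by
    funext ⟨⟩ c
    rcases c with a | ⟨⟩
    exacts [(hτl a).trans (if_neg Sum.inr_ne_inl).symm, hτr.trans (if_pos rfl).symm]
  have hηζ := QR.comp_ofFree_toFree hμ
  have hζη := QR.comp_toFree_ofFree hμ
  exact ⟨hηζ, hζη, QR.comp_toFree_self hμ, QR.comp_ofFree_freeUnit hres,
    QR.isMap_of_comp_eq_id hres hηζ hζη, QR.isMap_of_comp_eq_id hres hζη hηζ⟩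

/-- for a group `G` (identity `e = 1`) and a `Q`-map `μ : {⋆} ⇸ G`,
the `Q`-relations `ζ : G ⇸ (G₀)₊` and `η : (G₀)₊ ⇸ G` built from `μ` (where
`G₀ = {a ∈ G : a ≠ e}` and `(G₀)₊ = G₀ ⊔ {⋆}`) satisfy `η ∘ ζ = id_G`,
`ζ ∘ η = id_{(G₀)₊}`, `ζ ∘ μ = τ` and `η ∘ τ = μ`; in particular `ζ` and `η`
are mutually inverse `Q`-maps exhibiting an isomorphism between `μ` and the
free algebra on `G₀` in `{⋆}/Q-Map`. -/
theorem stmt17 {Q : Type*} [CompleteLattice Q] [CommMonoid Q]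
    (hbot : (⊥ : Q) < 1)
    (hdist : ∀ (p : Q) (s : Set Q), p * sSup s = ⨆ q ∈ s, p * q)
    (himp : Q → Q → Q)
    (hres : ∀ p q r : Q, p * q ≤ r ↔ p ≤ himp q r)
    {G : Type*} [Group G]
    (μ : PUnit → G → Q) (hμ : QR.IsMap himp μ)
    (ζ : G → ({a : G // a ≠ 1} ⊕ PUnit) → Q)
    (hζl : ∀ (x : G) (a : {a : G // a ≠ 1}),
      ζ x (Sum.inl a) = QR.star himp μ (x * (a : G)) PUnit.unit)
    (hζr : ∀ x : G, ζ x (Sum.inr PUnit.unit) = QR.star himp μ x PUnit.unit)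
    (η : ({a : G // a ≠ 1} ⊕ PUnit) → G → Q)
    (hηl : ∀ (a : {a : G // a ≠ 1}) (x : G),
      η (Sum.inl a) x = μ PUnit.unit (x * (a : G)))
    (hηr : ∀ x : G, η (Sum.inr PUnit.unit) x = μ PUnit.unit x)
    (τ : PUnit → ({a : G // a ≠ 1} ⊕ PUnit) → Q)
    (hτl : ∀ a : {a : G // a ≠ 1}, τ PUnit.unit (Sum.inl a) = ⊥)
    (hτr : τ PUnit.unit (Sum.inr PUnit.unit) = 1) :
    QR.comp η ζ = QR.id G ∧
    QR.comp ζ η = QR.id ({a : G // a ≠ 1} ⊕ PUnit) ∧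
    QR.comp ζ μ = τ ∧
    QR.comp η τ = μ ∧
    QR.IsMap himp ζ ∧
    QR.IsMap himp η :=
  stmt17_general himp hres μ hμ ζ hζl hζr η hηl hηr τ hτl hτr
end
end
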